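/- If {π_{U_1}(R),...,π_{U_m}(R)} is any factorization of a finite nonempty relation R, then every factor of R whose factorization schemas overlap two blocks splits: concretely, if U_i ≠ V and U_i ∩ V ≠ ∅ where π_V(R) is a factor of R, then π_{U_i}(R) = π_{U_i \ V}(R) × π_{U_i ∩ V}(R). -/

import Mathlib

open Classical

noncomputable def restrictT {α D : Type*} (V : Set α) (t : α → Option D) : α → Option D :=
  fun a => if a ∈ V then t a else none

def combineT {α D : Type*} (q r : α → Option D) : α → Option D :=
  fun a => (q a).orElse (fun _ => r a)

def prodRel {α D : Type*} (Q R : Set (α → Option D)) : Set (α → Option D) :=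
  Set.image2 combineT Q R

def IsOver {α D : Type*} (U : Set α) (t : α → Option D) : Prop :=
  ∀ a, (t a).isSome ↔ a ∈ U

def IsRelOver {α D : Type*} (U : Set α) (R : Set (α → Option D)) : Prop :=
  R.Finite ∧ ∀ t ∈ R, IsOver U t

noncomputable def projRel {α D : Type*} (V : Set α) (R : Set (α → Option D)) :
    Set (α → Option D) :=
  (restrictT V) '' R

def IsFactor {α D : Type*} (U : Set α) (R : Set (α → Option D))
    (V : Set α) (Q : Set (α → Option D)) : Prop :=
  V.Nonempty ∧ V ⊆ U ∧ IsRelOver V Q ∧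
    ∃ R', IsRelOver (U \ V) R' ∧ R = prodRel Q R'

noncomputable def prodList {α D : Type*} (L : List (Set (α → Option D))) :
    Set (α → Option D) :=
  L.foldr prodRel {fun _ => none}

def IsPrimeRel {α D : Type*} (U : Set α) (Q : Set (α → Option D)) : Prop :=
  IsRelOver U Q ∧ ∀ V P, IsFactor U Q V P → P = Q

def selEq {α D : Type*} (A : α) (v : D) (S : Set (α → Option D)) : Set (α → Option D) :=
  {t ∈ S | t A = some v}

def selNe {α D : Type*} (A : α) (v : D) (S : Set (α → Option D)) : Set (α → Option D) :=
  {t ∈ S | t A ≠ some v}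

/-!
If `π_V(R)` is a factor of `R`, then `R` is closed under mixing: the `V`-part of one tuple
combined with the part of another outside `V` is again in `R`, because the part outside `V`
of a tuple `q × r` of `π_V(R) × R'` is `r` itself. Hence every pair from `π_{W \ V}(R)` and
`π_{W ∩ V}(R)` is the projection to `W` of a single tuple of `R`, so
`π_W(R) = π_{W \ V}(R) × π_{W ∩ V}(R)` for every `W`.
-/

section

variable {α D : Type*}

theorem IsOver.eq_none {U : Set α} {t : α → Option D} (h : IsOver U t) {a : α} (ha : a ∉ U) :
    t a = none :=
  Option.not_isSome_iff_eq_none.mp fun hs => ha ((h a).mp hs)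

theorem restrictT_compl_combineT {V W : Set α} {q r : α → Option D} (hq : IsOver V q)
    (hr : IsOver W r) (hVW : Disjoint V W) : restrictT Vᶜ (combineT q r) = r := by
  funext a
  by_cases ha : a ∈ V
  · simp [restrictT, ha, hr.eq_none (hVW.notMem_of_mem_left ha)]
  · simp [restrictT, combineT, ha, hq.eq_none ha, Option.orElse]

theorem IsFactor.combineT_restrictT_mem {U V : Set α} {R : Set (α → Option D)}
    (hF : IsFactor U R V (projRel V R)) {s t : α → Option D} (hs : s ∈ R) (ht : t ∈ R) :
    combineT (restrictT V t) (restrictT Vᶜ s) ∈ R := by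
  obtain ⟨-, -, hQ, R', hR', hReq⟩ := hF
  rw [hReq] at hs ⊢
  obtain ⟨q, hq, r, hr, rfl⟩ := hs
  rw [restrictT_compl_combineT (hQ.2 q hq) (hR'.2 r hr) Set.disjoint_sdiff_right]
  exact Set.mem_image2_of_mem (Set.mem_image_of_mem _ (hReq ▸ ht)) hr

theorem restrictT_eq_combineT_diff_inter (W V : Set α) (s : α → Option D) :
    restrictT W s = combineT (restrictT (W \ V) s) (restrictT (W ∩ V) s) := by
  funext a
  by_cases hW : a ∈ W <;> by_cases hV : a ∈ V <;> simp [restrictT, combineT, hW, hV]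

theorem combineT_restrictT_diff_inter (W V : Set α) (s t : α → Option D) :
    combineT (restrictT (W \ V) s) (restrictT (W ∩ V) t) =
      restrictT W (combineT (restrictT V t) (restrictT Vᶜ s)) := by
  funext a
  by_cases hW : a ∈ W <;> by_cases hV : a ∈ V <;> simp [restrictT, combineT, hW, hV]

end

theorem stmt_2_general {α D : Type*} (U : Set α)
    (R : Set (α → Option D))
    (Ui V : Set α) (hF : IsFactor U R V (projRel V R)) :
    projRel Ui R = prodRel (projRel (Ui \ V) R) (projRel (Ui ∩ V) R) := by
  ext u
  constructor
  · rintro ⟨s, hs, rfl⟩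
    exact ⟨_, ⟨s, hs, rfl⟩, _, ⟨s, hs, rfl⟩, (restrictT_eq_combineT_diff_inter Ui V s).symm⟩
  · rintro ⟨_, ⟨s, hs, rfl⟩, _, ⟨t, ht, rfl⟩, rfl⟩
    exact ⟨_, hF.combineT_restrictT_mem hs ht, (combineT_restrictT_diff_inter Ui V s t).symm⟩

theorem stmt_2 {α D : Type*} (U : Set α) (hUfin : U.Finite)
    (R : Set (α → Option D)) (hR : IsRelOver U R) (hRne : R.Nonempty)
    (L : List (Set α)) (hne : ∀ V' ∈ L, V'.Nonempty) (hd : L.Pairwise Disjoint)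
    (hcov : ∀ a, a ∈ U ↔ ∃ V' ∈ L, a ∈ V')
    (hfacL : ∀ V' ∈ L, IsFactor U R V' (projRel V' R))
    (hprod : prodList (L.map (fun V' => projRel V' R)) = R)
    (Ui V : Set α) (hUi : Ui ∈ L) (hF : IsFactor U R V (projRel V R))
    (hneq : Ui ≠ V) (hint : (Ui ∩ V).Nonempty) :
    projRel Ui R = prodRel (projRel (Ui \ V) R) (projRel (Ui ∩ V) R) :=
  stmt_2_general U R Ui V hF
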